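/- Let q ∈ ℂ with |q| < 1, and let i denote the imaginary unit. Then 1 + U₂(i, q) = (iq;q)_∞ (−iq;q)_∞ = (−q²; q²)_∞. -/

import Mathlib

/-- The finite q-Pochhammer symbol `(z;q)_n = ∏_{i=0}^{n-1} (1 - z q^i)`. -/
noncomputable def qPoch (z q : ℂ) (n : ℕ) : ℂ := ∏ i ∈ Finset.range n, (1 - z * q ^ i)

/-- The infinite q-Pochhammer symbol `(z;q)_∞ = ∏_{i=0}^{∞} (1 - z q^i)`. -/
noncomputable def qPochInf (z q : ℂ) : ℂ := ∏' i : ℕ, (1 - z * q ^ i)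

/-- The rank generating function
`U_k(z,q) = ∑_{n=0}^∞ q^{k(n+1)} (−zq;q)_n (−z⁻¹q;q)_n` for strongly unimodal
sequences with a k-fold peak. -/
noncomputable def strongU (k : ℕ) (z q : ℂ) : ℂ :=
  ∑' n : ℕ, q ^ (k * (n + 1)) * qPoch (-(z * q)) q n * qPoch (-(z⁻¹ * q)) q n

/-! At `z = i` the two Pochhammer factors of `U₂` pair up:
`(-iq;q)ₙ (iq;q)ₙ = (-q²;q²)ₙ`, because `(1 - w)(1 + w) = 1 - w²`.
Then `q^{2(n+1)} (-q²;q²)ₙ = (-q²;q²)ₙ₊₁ - (-q²;q²)ₙ`, so `1 + U₂(i,q)` telescopes to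
`(-q²;q²)_∞`, and the same pairing of factors gives `(iq;q)_∞ (-iq;q)_∞ = (-q²;q²)_∞`. -/

open Filter Topology

lemma multipliable_one_sub_mul_pow (z : ℂ) {q : ℂ} (hq : ‖q‖ < 1) :
    Multipliable fun n : ℕ => 1 - z * q ^ n := by
  simp_rw [sub_eq_add_neg]
  refine multipliable_one_add_of_summable ?_
  simpa [norm_mul, norm_pow] using
    (summable_geometric_of_lt_one (norm_nonneg q) hq).mul_left ‖z‖

lemma tendsto_qPoch_qPochInf (z : ℂ) {q : ℂ} (hq : ‖q‖ < 1) :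
    Tendsto (qPoch z q) atTop (𝓝 (qPochInf z q)) :=
  (multipliable_one_sub_mul_pow z hq).hasProd.tendsto_prod_nat

lemma qPoch_zero (z q : ℂ) : qPoch z q 0 = 1 := Finset.prod_range_zero _

lemma qPoch_succ (z q : ℂ) (n : ℕ) : qPoch z q (n + 1) = qPoch z q n * (1 - z * q ^ n) :=
  Finset.prod_range_succ _ n

lemma qPoch_mul_qPoch_neg (z q : ℂ) (n : ℕ) :
    qPoch z q n * qPoch (-z) q n = qPoch (z ^ 2) (q ^ 2) n := by
  simp only [qPoch, ← Finset.prod_mul_distrib]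
  exact Finset.prod_congr rfl fun i _ => by ring

lemma qPochInf_mul_qPochInf_neg (z : ℂ) {q : ℂ} (hq : ‖q‖ < 1) :
    qPochInf z q * qPochInf (-z) q = qPochInf (z ^ 2) (q ^ 2) := by
  have hq2 : ‖q ^ 2‖ < 1 := by rw [norm_pow]; exact pow_lt_one₀ (norm_nonneg q) hq two_ne_zero
  refine tendsto_nhds_unique ?_ (tendsto_qPoch_qPochInf (z ^ 2) hq2)
  simpa only [qPoch_mul_qPoch_neg] using
    (tendsto_qPoch_qPochInf z hq).mul (tendsto_qPoch_qPochInf (-z) hq)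

lemma hasSum_neg_mul_qPoch (z : ℂ) {q : ℂ} (hq : ‖q‖ < 1) :
    HasSum (fun n : ℕ => -(z * q ^ n) * qPoch z q n) (qPochInf z q - 1) := by
  have hterm : ∀ n, -(z * q ^ n) * qPoch z q n = qPoch z q (n + 1) - qPoch z q n := fun n => by
    rw [qPoch_succ]; ring
  have hsummable : Summable fun n : ℕ => -(z * q ^ n) * qPoch z q n := by
    refine summable_of_isBigO_nat
      ((summable_geometric_of_lt_one (norm_nonneg q) hq).mul_left ‖z‖) ?_
    have hbounded := (tendsto_qPoch_qPochInf z hq).isBigO_one ℝ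
    simpa [norm_mul, norm_pow] using
      (Asymptotics.isBigO_refl (fun n => -(z * q ^ n)) atTop).norm_right.mul hbounded
  rw [hsummable.hasSum_iff_tendsto_nat]
  simp_rw [hterm, Finset.sum_range_sub, qPoch_zero]
  exact (tendsto_qPoch_qPochInf z hq).sub_const 1

lemma strongU_two_I_term (q : ℂ) (n : ℕ) :
    q ^ (2 * (n + 1)) * qPoch (-(Complex.I * q)) q n * qPoch (-(Complex.I⁻¹ * q)) q n
      = -(-q ^ 2 * (q ^ 2) ^ n) * qPoch (-q ^ 2) (q ^ 2) n := by
  have hpair := qPoch_mul_qPoch_neg (-(Complex.I * q)) q n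
  rw [neg_sq, mul_pow, Complex.I_sq, neg_one_mul] at hpair
  rw [mul_assoc, Complex.inv_I, neg_mul, hpair]
  ring

/-- For `|q| < 1`,
`1 + U₂(i,q) = (iq;q)_∞ (−iq;q)_∞ = (−q²;q²)_∞`. -/
theorem strongU_two_at_i (q : ℂ) (hq : ‖q‖ < 1) :
    1 + strongU 2 Complex.I q
        = qPochInf (Complex.I * q) q * qPochInf (-Complex.I * q) q ∧
    qPochInf (Complex.I * q) q * qPochInf (-Complex.I * q) q
        = qPochInf (-q ^ 2) (q ^ 2) := by
  have hq2 : ‖q ^ 2‖ < 1 := by rw [norm_pow]; exact pow_lt_one₀ (norm_nonneg q) hq two_ne_zero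
  have hprod : qPochInf (Complex.I * q) q * qPochInf (-Complex.I * q) q
      = qPochInf (-q ^ 2) (q ^ 2) := by
    rw [neg_mul, qPochInf_mul_qPochInf_neg _ hq, mul_pow, Complex.I_sq, neg_one_mul]
  refine ⟨?_, hprod⟩
  rw [hprod, strongU]
  simp_rw [strongU_two_I_term]
  rw [(hasSum_neg_mul_qPoch _ hq2).tsum_eq]
  ring
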